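/- The group GL_6(F_2) of invertible 6×6 matrices over the field with 2 elements contains no subgroup isomorphic to PSL_2(F_8) × C_2, the direct product of PSL_2(F_8) = SL_2(F_8) with a cyclic group of order 2. -/

import Mathlib

/-!
`SL₂(𝔽₈) × C₂` contains an element of order 18, but `GL₆(𝔽₂)` does not.

In `SL₂` the trace of `g³` is `t³ - 3t` for `t = tr g`, and an element of trace `-1` has cube `1`
by Cayley–Hamilton; so `g` has order 9 as soon as `t³ - 3t + 1 = 0` and `3 ≠ 0`. Over `𝔽₈` such a
`t` is a root of `X³ + X + 1`, and a root of this cubic or of its reciprocal exists because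
`X⁷ - 1 = (X - 1)(X³ + X + 1)(X³ + X² + 1)` over `𝔽₂`.

If `A ∈ GL₆(𝔽₂)` satisfies `A¹⁸ = 1`, its minimal polynomial has degree at most 6 and divides
`X¹⁸ - 1 = Φ₉² (X³ - 1)²`. Since 2 has order 6 modulo 9, `Φ₉` is irreducible of degree 6 over `𝔽₂`.
Hence the minimal polynomial is either `Φ₉`, giving `A⁹ = 1`, or divides `(X³ - 1)² = X⁶ - 1`.
-/

open Polynomial Matrix

theorem Polynomial.natDegree_cyclotomic_nine (R : Type*) [Ring R] [Nontrivial R] :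
    (cyclotomic 9 R).natDegree = 6 := by
  rw [natDegree_cyclotomic]
  decide

theorem Polynomial.irreducible_cyclotomic_nine_zmod_two : Irreducible (cyclotomic 9 (ZMod 2)) := by
  have : Fact (Nat.Prime 2) := ⟨Nat.prime_two⟩
  refine ZMod.irreducible_of_dvd_cyclotomic_of_natDegree (by norm_num) dvd_rfl ?_
  rw [natDegree_cyclotomic_nine, eq_comm, orderOf_eq_iff (by norm_num)]
  refine ⟨by decide, fun m hm6 hm0 => ?_⟩
  interval_cases m <;> decide

theorem Matrix.pow_nine_eq_one_or_pow_six_eq_one {K ι : Type*} [Field K] [CharP K 2]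
    [Fintype ι] [DecidableEq ι] (hK : Irreducible (cyclotomic 9 K)) (hι : Fintype.card ι ≤ 6)
    {A : Matrix ι ι K} (hA : A ^ 18 = 1) : A ^ 9 = 1 ∨ A ^ 6 = 1 := by
  have : Fact (Nat.Prime 2) := ⟨Nat.prime_two⟩
  have : Fact (Nat.Prime 3) := ⟨Nat.prime_three⟩
  set m := minpoly K A
  have hm0 : m ≠ 0 := minpoly.ne_zero (Matrix.isIntegral A)
  have hmdeg : m.natDegree ≤ 6 :=
    calc m.natDegree ≤ A.charpoly.natDegree :=
          natDegree_le_of_dvd (Matrix.minpoly_dvd_charpoly A) A.charpoly_monic.ne_zero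
      _ = Fintype.card ι := A.charpoly_natDegree_eq_dim
      _ ≤ 6 := hι
  have hX9 : cyclotomic 9 K * (X ^ 3 - 1) = X ^ 9 - 1 :=
    cyclotomic_prime_pow_mul_X_pow_sub_one K 3 1
  have hX18 : (X ^ 9 - 1 : K[X]) ^ 2 = X ^ 18 - 1 := by rw [sub_pow_char, one_pow, ← pow_mul]
  have hX6 : (X ^ 3 - 1 : K[X]) ^ 2 = X ^ 6 - 1 := by rw [sub_pow_char, one_pow, ← pow_mul]
  have hm18 : m ∣ cyclotomic 9 K ^ 2 * (X ^ 3 - 1) ^ 2 := by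
    rw [← mul_pow, hX9, hX18, minpoly.dvd_iff]
    simp [hA]
  by_cases hdvd : cyclotomic 9 K ∣ m
  · left
    have hm9 : m ∣ X ^ 9 - 1 := by
      refine (associated_of_dvd_of_natDegree_le hdvd hm0 ?_).symm.dvd.trans (Dvd.intro _ hX9)
      rwa [natDegree_cyclotomic_nine]
    simpa [sub_eq_zero] using minpoly.dvd_iff.mp hm9
  · right
    have hm6 : m ∣ X ^ 6 - 1 := by
      rw [← hX6]
      exact ((hK.coprime_iff_not_dvd.mpr hdvd).symm.pow_right).dvd_of_dvd_mul_left hm18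
    simpa [sub_eq_zero] using minpoly.dvd_iff.mp hm6

theorem Matrix.GeneralLinearGroup.orderOf_ne_eighteen {K ι : Type*} [Field K] [CharP K 2]
    [Fintype ι] [DecidableEq ι] (hK : Irreducible (cyclotomic 9 K)) (hι : Fintype.card ι ≤ 6)
    (g : GL ι K) : orderOf g ≠ 18 := by
  intro hg
  rw [← orderOf_units] at hg
  rcases pow_nine_eq_one_or_pow_six_eq_one hK hι (hg ▸ pow_orderOf_eq_one _) with h | h <;>
  · have := hg ▸ orderOf_dvd_of_pow_eq_one h
    norm_num at this

namespace Matrix.SpecialLinearGroup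

variable {R : Type*} [CommRing R]

theorem coe_sq_eq_trace_smul_sub_one (g : SpecialLinearGroup (Fin 2) R) :
    (g : Matrix (Fin 2) (Fin 2) R) ^ 2 =
      trace (g : Matrix (Fin 2) (Fin 2) R) • (g : Matrix (Fin 2) (Fin 2) R) - 1 := by
  have hdet := g.det_coe
  rw [det_fin_two] at hdet
  ext i j
  fin_cases i <;> fin_cases j <;> simp [sq, mul_apply, Fin.sum_univ_two, trace_fin_two] <;>
    first | linear_combination -hdet | ring1

theorem trace_coe_pow_three (g : SpecialLinearGroup (Fin 2) R) :
    trace ((g : Matrix (Fin 2) (Fin 2) R) ^ 3) =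
      trace (g : Matrix (Fin 2) (Fin 2) R) ^ 3 - 3 * trace (g : Matrix (Fin 2) (Fin 2) R) := by
  have h2 := coe_sq_eq_trace_smul_sub_one g
  set t := trace (g : Matrix (Fin 2) (Fin 2) R)
  have h3 : (g : Matrix (Fin 2) (Fin 2) R) ^ 3 =
      (t ^ 2 - 1) • (g : Matrix (Fin 2) (Fin 2) R) - t • 1 := by
    rw [pow_succ', h2, mul_sub, mul_smul_comm, ← sq, h2, mul_one, sub_smul, smul_sub, smul_smul]
    module
  rw [h3, trace_sub, trace_smul, trace_smul, trace_one, Fintype.card_fin]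
  simp only [smul_eq_mul, Nat.cast_ofNat]
  ring

theorem pow_three_eq_one_of_trace_eq_neg_one (g : SpecialLinearGroup (Fin 2) R)
    (h : trace (g : Matrix (Fin 2) (Fin 2) R) = -1) : g ^ 3 = 1 := by
  have h2 := coe_sq_eq_trace_smul_sub_one g
  rw [h, neg_one_smul] at h2
  apply Subtype.ext
  rw [coe_pow, coe_one, pow_succ', h2, mul_sub, mul_neg, ← sq, h2, mul_one]
  abel

theorem orderOf_eq_nine_of_trace (h3 : (3 : R) ≠ 0) (g : SpecialLinearGroup (Fin 2) R)
    (h : trace (g : Matrix (Fin 2) (Fin 2) R) ^ 3 -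
      3 * trace (g : Matrix (Fin 2) (Fin 2) R) + 1 = 0) :
    orderOf g = 9 := by
  have htr : trace ((g ^ 3 : SpecialLinearGroup (Fin 2) R) : Matrix (Fin 2) (Fin 2) R) = -1 := by
    rw [coe_pow, trace_coe_pow_three]
    linear_combination h
  have : Fact (Nat.Prime 3) := ⟨Nat.prime_three⟩
  refine orderOf_eq_prime_pow (p := 3) (n := 1) (fun hg => h3 ?_) ?_
  · rw [pow_one] at hg
    rw [hg, coe_one, trace_one, Fintype.card_fin] at htr
    linear_combination htr
  · rw [show 3 ^ (1 + 1) = 3 * 3 from rfl, pow_mul, pow_three_eq_one_of_trace_eq_neg_one _ htr]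

end Matrix.SpecialLinearGroup

theorem GaloisField.exists_cube_add_self_add_one_eq_zero :
    ∃ t : GaloisField 2 3, t ^ 3 + t + 1 = 0 := by
  have : Fact (Nat.Prime 7) := ⟨by norm_num⟩
  have hcard : Nat.card (GaloisField 2 3)ˣ = 7 := by
    rw [Nat.card_units, GaloisField.card 2 3 (by norm_num)]
    rfl
  obtain ⟨u, hu⟩ := exists_prime_orderOf_dvd_card' (G := (GaloisField 2 3)ˣ) 7 hcard.symm.dvd
  rw [← orderOf_units] at hu
  set x : GaloisField 2 3 := ↑u
  have hx7 : x ^ 7 = 1 := hu ▸ pow_orderOf_eq_one x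
  have hx1 : x - 1 ≠ 0 := by
    rw [sub_ne_zero]
    rintro hx
    rw [hx, orderOf_one] at hu
    norm_num at hu
  have h2 : (2 : GaloisField 2 3) = 0 := CharTwo.two_eq_zero
  have hfac : (x - 1) * ((x ^ 3 + x + 1) * (x ^ 3 + x ^ 2 + 1)) = 0 := by
    linear_combination hx7 + x ^ 3 * (x - 1) * h2
  rcases mul_eq_zero.mp ((mul_eq_zero.mp hfac).resolve_left hx1) with h | h
  · exact ⟨x, h⟩
  · -- `x ^ 6 = x⁻¹` is a root of the reciprocal polynomial
    exact ⟨x ^ 6, by linear_combination x ^ 4 * h + (x ^ 4 * (x ^ 7 + 1) - 1) * hx7⟩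

theorem Matrix.SpecialLinearGroup.exists_orderOf_eq_nine_galoisField_two_three :
    ∃ g : SpecialLinearGroup (Fin 2) (GaloisField 2 3), orderOf g = 9 := by
  obtain ⟨t, ht⟩ := GaloisField.exists_cube_add_self_add_one_eq_zero
  have h2 : (2 : GaloisField 2 3) = 0 := CharTwo.two_eq_zero
  let g : SpecialLinearGroup (Fin 2) (GaloisField 2 3) := ⟨!![0, -1; 1, t], by simp⟩
  refine ⟨g, orderOf_eq_nine_of_trace ?_ g ?_⟩
  · rw [show (3 : GaloisField 2 3) = 1 by linear_combination h2]
    exact one_ne_zero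
  · rw [show trace (g : Matrix (Fin 2) (Fin 2) (GaloisField 2 3)) = t by simp [g, trace_fin_two]]
    linear_combination ht - 2 * t * h2

/-- `GL₆(F₂)` contains no subgroup isomorphic to `PSL₂(F₈) × C₂`. -/
theorem stmt_17 (H : Subgroup (Matrix.GeneralLinearGroup (Fin 6) (ZMod 2))) :
    ¬ Nonempty (H ≃*
      (Matrix.SpecialLinearGroup (Fin 2) (GaloisField 2 3) × Multiplicative (ZMod 2))) := by
  rintro ⟨e⟩
  obtain ⟨g, hg⟩ := SpecialLinearGroup.exists_orderOf_eq_nine_galoisField_two_three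
  have hgt : orderOf (g, Multiplicative.ofAdd (1 : ZMod 2)) = 18 := by
    rw [Prod.orderOf, hg, orderOf_ofAdd_eq_addOrderOf, ZMod.addOrderOf_one]
    rfl
  refine GeneralLinearGroup.orderOf_ne_eighteen irreducible_cyclotomic_nine_zmod_two
    (by simp) (e.symm (g, Multiplicative.ofAdd 1) : GL (Fin 6) (ZMod 2)) ?_
  rw [Subgroup.orderOf_coe, MulEquiv.orderOf_eq, hgt]
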